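/- arXiv:2407.01703 — 9 statements merged into one kernel-verified Lean document; each statement's English description precedes it below -/
import Mathlib

section
/- Let Z, Z̄, R, R̄ be mutually independent random variables on a finite probability space, and let X = f₁(Z, R) for some function f₁. Suppose a random variable K satisfies K = g(Z, Z̄) and K = g₁(X, Z̄, R̄) for some functions g, g₁. Then K is a function of (X, Z̄), i.e., there exists a function h with K = h(X, Z̄). -/
open scoped Classical BigOperators

/-- Probability of an event `E` under weight function `p` on a finite sample space. -/
noncomputable def pr {Ω : Type*} [Fintype Ω] (p : Ω → ℝ) (E : Ω → Prop) : ℝ :=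
  ∑ ω, if E ω then p ω else 0

lemma pr_pos {Ω : Type*} [Fintype Ω] (p : Ω → ℝ) (hp : ∀ ω, 0 < p ω)
    (E : Ω → Prop) (ω₀ : Ω) (h : E ω₀) : 0 < pr p E := by
  unfold pr
  have : (if E ω₀ then p ω₀ else 0) ≤ ∑ ω, if E ω then p ω else 0 :=
    Finset.single_le_sum (f := fun ω => if E ω then p ω else 0)
      (fun i _ => by split_ifs; exacts [(hp i).le, le_rfl]) (Finset.mem_univ ω₀)
  simp only [h, if_true] at this
  linarith [hp ω₀]

lemma pr_exists {Ω : Type*} [Fintype Ω] (p : Ω → ℝ)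
    (E : Ω → Prop) (h : 0 < pr p E) : ∃ ω, E ω := by
  by_contra hc
  push_neg at hc
  unfold pr at h
  simp [hc] at h

theorem stmt0 {Ω Zt Zbt Rt Rbt Xt Kt : Type*} [Fintype Ω]
    (p : Ω → ℝ) (hp : ∀ ω, 0 < p ω) (hsum : ∑ ω, p ω = 1)
    (Z : Ω → Zt) (Zb : Ω → Zbt) (R : Ω → Rt) (Rb : Ω → Rbt)
    (hindep : ∀ (z : Zt) (zb : Zbt) (r : Rt) (rb : Rbt),
      pr p (fun ω => Z ω = z ∧ Zb ω = zb ∧ R ω = r ∧ Rb ω = rb)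
        = pr p (fun ω => Z ω = z) * pr p (fun ω => Zb ω = zb) * pr p (fun ω => R ω = r)
          * pr p (fun ω => Rb ω = rb))
    (X : Ω → Xt) (f₁ : Zt → Rt → Xt) (hX : ∀ ω, X ω = f₁ (Z ω) (R ω))
    (K : Ω → Kt) (g : Zt → Zbt → Kt) (hg : ∀ ω, K ω = g (Z ω) (Zb ω))
    (g₁ : Xt → Zbt → Rbt → Kt) (hg₁ : ∀ ω, K ω = g₁ (X ω) (Zb ω) (Rb ω)) :
    ∃ h : Xt → Zbt → Kt, ∀ ω, K ω = h (X ω) (Zb ω) := by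
  -- Ω is nonempty
  have hΩ : Nonempty Ω := by
    by_contra hc
    rw [not_nonempty_iff] at hc
    simp [Finset.univ_eq_empty] at hsum
  obtain ⟨ω₀⟩ := hΩ
  -- well-definedness
  have key : ∀ ω₁ ω₂, X ω₁ = X ω₂ → Zb ω₁ = Zb ω₂ → K ω₁ = K ω₂ := by
    intro ω₁ ω₂ hx hzb
    -- hybrid outcome: Z = Z ω₂, Zb = Zb ω₁, R = R ω₂, Rb = Rb ω₁
    have hpos : 0 < pr p (fun ω => Z ω = Z ω₂ ∧ Zb ω = Zb ω₁ ∧ R ω = R ω₂ ∧ Rb ω = Rb ω₁) := by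
      rw [hindep]
      have h1 := pr_pos p hp (fun ω => Z ω = Z ω₂) ω₂ rfl
      have h2 := pr_pos p hp (fun ω => Zb ω = Zb ω₁) ω₁ rfl
      have h3 := pr_pos p hp (fun ω => R ω = R ω₂) ω₂ rfl
      have h4 := pr_pos p hp (fun ω => Rb ω = Rb ω₁) ω₁ rfl
      positivity
    obtain ⟨ω₃, hz3, hzb3, hr3, hrb3⟩ := pr_exists p _ hpos
    have hx3 : X ω₃ = X ω₂ := by rw [hX, hX, hz3, hr3]
    calc K ω₁ = g₁ (X ω₁) (Zb ω₁) (Rb ω₁) := hg₁ ω₁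
      _ = g₁ (X ω₃) (Zb ω₃) (Rb ω₃) := by rw [hx3, hx, hzb3, hrb3]
      _ = K ω₃ := (hg₁ ω₃).symm
      _ = g (Z ω₃) (Zb ω₃) := hg ω₃
      _ = g (Z ω₂) (Zb ω₂) := by rw [hz3, hzb3, hzb]
      _ = K ω₂ := (hg ω₂).symm
  refine ⟨fun x zb => if hx : ∃ ω, X ω = x ∧ Zb ω = zb then K hx.choose else K ω₀, fun ω => ?_⟩
  have hx : ∃ ω', X ω' = X ω ∧ Zb ω' = Zb ω := ⟨ω, rfl, rfl⟩
  dsimp only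
  rw [dif_pos hx]
  exact key ω hx.choose hx.choose_spec.1.symm hx.choose_spec.2.symm
end

section
/- Let Z₁, Z₂, Z₃, R be mutually independent random variables on a finite probability space, and let X₁ = f₁(Z₁, R) and X₂ = f₂(Z₂, R) for functions f₁, f₂. Suppose K = g(Z₁, Z₂, Z₃) = g₁(Z₁, X₂, Z₃) = g₂(X₁, Z₂, Z₃) for functions g, g₁, g₂. Then there exists a function h with K = h(X₁, X₂, Z₃). -/
open scoped Classical BigOperators

theorem stmt1 {Ω Z1t Z2t Z3t Rt X1t X2t Kt : Type*} [Fintype Ω]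
    (p : Ω → ℝ) (hp : ∀ ω, 0 < p ω) (hsum : ∑ ω, p ω = 1)
    (Z₁ : Ω → Z1t) (Z₂ : Ω → Z2t) (Z₃ : Ω → Z3t) (R : Ω → Rt)
    (hindep : ∀ (z₁ : Z1t) (z₂ : Z2t) (z₃ : Z3t) (r : Rt),
      pr p (fun ω => Z₁ ω = z₁ ∧ Z₂ ω = z₂ ∧ Z₃ ω = z₃ ∧ R ω = r)
        = pr p (fun ω => Z₁ ω = z₁) * pr p (fun ω => Z₂ ω = z₂)
          * pr p (fun ω => Z₃ ω = z₃) * pr p (fun ω => R ω = r))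
    (X₁ : Ω → X1t) (f₁ : Z1t → Rt → X1t) (hX₁ : ∀ ω, X₁ ω = f₁ (Z₁ ω) (R ω))
    (X₂ : Ω → X2t) (f₂ : Z2t → Rt → X2t) (hX₂ : ∀ ω, X₂ ω = f₂ (Z₂ ω) (R ω))
    (K : Ω → Kt)
    (g : Z1t → Z2t → Z3t → Kt) (hg : ∀ ω, K ω = g (Z₁ ω) (Z₂ ω) (Z₃ ω))
    (g₁ : Z1t → X2t → Z3t → Kt) (hg₁ : ∀ ω, K ω = g₁ (Z₁ ω) (X₂ ω) (Z₃ ω))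
    (g₂ : X1t → Z2t → Z3t → Kt) (hg₂ : ∀ ω, K ω = g₂ (X₁ ω) (Z₂ ω) (Z₃ ω)) :
    ∃ h : X1t → X2t → Z3t → Kt, ∀ ω, K ω = h (X₁ ω) (X₂ ω) (Z₃ ω) := by
  have pos_of : ∀ (E : Ω → Prop) (ω₀ : Ω), E ω₀ → 0 < pr p E := by
    intro E ω₀ hE
    unfold pr
    apply Finset.sum_pos'
    · intro ω _
      split <;> [exact (hp ω).le; exact le_rfl]
    · exact ⟨ω₀, Finset.mem_univ _, by simp [hE, hp ω₀]⟩
  have exists_of : ∀ (E : Ω → Prop), 0 < pr p E → ∃ ω, E ω := by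
    intro E hpos
    by_contra hne
    push_neg at hne
    have : pr p E = 0 := by
      unfold pr
      exact Finset.sum_eq_zero fun ω _ => by simp [hne ω]
    linarith
  have combo : ∀ ω₁ ω₂ ω₃ ω₄ : Ω, ∃ ωa : Ω,
      Z₁ ωa = Z₁ ω₁ ∧ Z₂ ωa = Z₂ ω₂ ∧ Z₃ ωa = Z₃ ω₃ ∧ R ωa = R ω₄ := by
    intro ω₁ ω₂ ω₃ ω₄
    apply exists_of
    rw [hindep]
    exact mul_pos (mul_pos (mul_pos (pos_of _ ω₁ rfl) (pos_of _ ω₂ rfl))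
      (pos_of _ ω₃ rfl)) (pos_of _ ω₄ rfl)
  have key : ∀ ω ω' : Ω, X₁ ω = X₁ ω' → X₂ ω = X₂ ω' → Z₃ ω = Z₃ ω' →
      K ω = K ω' := by
    intro ω ω' h1 h2 h3
    obtain ⟨ωa, ha1, ha2, ha3, ha4⟩ := combo ω ω' ω ω'
    obtain ⟨ωb, hb1, hb2, hb3, hb4⟩ := combo ω ω' ω ω
    have hKa : K ωa = K ω := by
      rw [hg₁ ωa, hg₁ ω, ha1, ha3, hX₂ ωa, ha2, ha4, ← hX₂ ω', ← h2]
    have hab : K ωa = K ωb := by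
      rw [hg ωa, hg ωb, ha1, ha2, ha3, hb1, hb2, hb3]
    have hKb : K ωb = K ω' := by
      rw [hg₂ ωb, hg₂ ω', hX₁ ωb, hb1, hb4, ← hX₁ ω, h1, hb2, hb3, h3]
    rw [← hKa, hab, hKb]
  have hΩ : Nonempty Ω := by
    by_contra h
    rw [not_nonempty_iff] at h
    rw [Finset.univ_eq_empty, Finset.sum_empty] at hsum
    norm_num at hsum
  obtain ⟨ω₀⟩ := hΩ
  refine ⟨fun x₁ x₂ z₃ =>
    if hx : ∃ ω, X₁ ω = x₁ ∧ X₂ ω = x₂ ∧ Z₃ ω = z₃ then K hx.choose else K ω₀,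
    fun ω => ?_⟩
  have hx : ∃ ω', X₁ ω' = X₁ ω ∧ X₂ ω' = X₂ ω ∧ Z₃ ω' = Z₃ ω := ⟨ω, rfl, rfl, rfl⟩
  beta_reduce
  rw [dif_pos hx]
  obtain ⟨c1, c2, c3⟩ := hx.choose_spec
  exact (key hx.choose ω c1 c2 c3).symm
end

section
/- Let Z₁, Z₂, Z₃, R be variables ranging over sets 𝒵₁, 𝒵₂, 𝒵₃, ℛ, and let f₁ : 𝒵₁ × ℛ → 𝒳₁, f₂ : 𝒵₂ × ℛ → 𝒳₂, g : 𝒵₁ × 𝒵₂ × 𝒵₃ → 𝒦, g₁ : 𝒵₁ × 𝒳₂ × 𝒵₃ → 𝒦, g₂ : 𝒳₁ × 𝒵₂ × 𝒵₃ → 𝒦 satisfy g(z₁, z₂, z₃) = g₁(z₁, f₂(z₂, r), z₃) = g₂(f₁(z₁, r), z₂, z₃) for all z₁, z₂, z₃, r. Then for all z₁, z₂, z₃, r and z₁′, z₂′, r′, if f₁(z₁, r) = f₁(z₁′, r′) and f₂(z₂, r) = f₂(z₂′, r′), then g(z₁, z₂, z₃) = g(z₁′, z₂′, z₃). -/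
theorem stmt2 {Z1t Z2t Z3t Rt X1t X2t Kt : Type*}
    (f₁ : Z1t → Rt → X1t) (f₂ : Z2t → Rt → X2t)
    (g : Z1t → Z2t → Z3t → Kt) (g₁ : Z1t → X2t → Z3t → Kt) (g₂ : X1t → Z2t → Z3t → Kt)
    (hg₁ : ∀ z₁ z₂ z₃ r, g z₁ z₂ z₃ = g₁ z₁ (f₂ z₂ r) z₃)
    (hg₂ : ∀ z₁ z₂ z₃ r, g z₁ z₂ z₃ = g₂ (f₁ z₁ r) z₂ z₃) :
    ∀ z₁ z₂ z₃ r z₁' z₂' r', f₁ z₁ r = f₁ z₁' r' → f₂ z₂ r = f₂ z₂' r' →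
      g z₁ z₂ z₃ = g z₁' z₂' z₃ := by
  intro z₁ z₂ z₃ r z₁' z₂' r' h1 h2
  calc g z₁ z₂ z₃ = g₁ z₁ (f₂ z₂ r) z₃ := hg₁ z₁ z₂ z₃ r
    _ = g₁ z₁ (f₂ z₂' r') z₃ := by rw [h2]
    _ = g z₁ z₂' z₃ := (hg₁ z₁ z₂' z₃ r').symm
    _ = g₂ (f₁ z₁ r) z₂' z₃ := hg₂ z₁ z₂' z₃ r
    _ = g₂ (f₁ z₁' r') z₂' z₃ := by rw [h1]
    _ = g z₁' z₂' z₃ := (hg₂ z₁' z₂' z₃ r').symm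
end

section
/- Let M, a₁, …, a_ℓ, α, β be mutually independent uniformly distributed random variables with values in ZMod 2 (ℓ ≥ 1). Then the tuple (α, β, M + α + β + a₁, a₁ + a₂, a₂ + a₃, …, a_{ℓ-1} + a_ℓ) is independent of M, i.e., I(M ; α, β, M+α+β+a₁, a₁+a₂, …, a_{ℓ-1}+a_ℓ) = 0. -/
open scoped Classical BigOperators

private lemma pr_congr' {Ω : Type*} [Fintype Ω] (p : Ω → ℝ) {E F : Ω → Prop}
    (h : ∀ ω, E ω ↔ F ω) : pr p E = pr p F := by
  unfold pr
  exact Finset.sum_congr rfl fun ω _ => by rw [if_congr (h ω) rfl rfl]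

private lemma pr_split' {Ω : Type*} [Fintype Ω] (p : Ω → ℝ) (M : Ω → ZMod 2) (E : Ω → Prop) :
    pr p E = pr p (fun ω => M ω = 0 ∧ E ω) + pr p (fun ω => M ω = 1 ∧ E ω) := by
  unfold pr
  rw [← Finset.sum_add_distrib]
  refine Finset.sum_congr rfl fun ω _ => ?_
  rcases (by decide : ∀ z : ZMod 2, z = 0 ∨ z = 1) (M ω) with h | h <;>
    simp [h, show (0 : ZMod 2) ≠ 1 by decide, show (1 : ZMod 2) ≠ 0 by decide]

private lemma zA' : ∀ u w r : ZMod 2, u + w = r ↔ w = u + r := by decide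
private lemma zB' : ∀ u w : ZMod 2, u + (u + w) = w := by decide
private lemma zC' : ∀ u w r : ZMod 2, (u + w) + (u + (w + r)) = r := by decide

theorem stmt3 {Ω : Type*} [Fintype Ω]
    (p : Ω → ℝ) (hp : ∀ ω, 0 < p ω) (hsum : ∑ ω, p ω = 1)
    (ℓ : ℕ) (hℓ : 1 ≤ ℓ)
    (M α β : Ω → ZMod 2) (a : Fin ℓ → Ω → ZMod 2)
    (hMunif : ∀ m, pr p (fun ω => M ω = m) = 1 / 2)
    (hαunif : ∀ x, pr p (fun ω => α ω = x) = 1 / 2)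
    (hβunif : ∀ y, pr p (fun ω => β ω = y) = 1 / 2)
    (haunif : ∀ i v, pr p (fun ω => a i ω = v) = 1 / 2)
    (hindep : ∀ (m x y : ZMod 2) (v : Fin ℓ → ZMod 2),
      pr p (fun ω => M ω = m ∧ α ω = x ∧ β ω = y ∧ ∀ i, a i ω = v i)
        = pr p (fun ω => M ω = m) * pr p (fun ω => α ω = x) * pr p (fun ω => β ω = y)
          * ∏ i, pr p (fun ω => a i ω = v i)) :
    ∀ (m : ZMod 2) (t : ZMod 2 × ZMod 2 × ZMod 2 × (Fin (ℓ - 1) → ZMod 2)),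
      pr p (fun ω => M ω = m ∧
          (α ω, β ω, M ω + α ω + β ω + a ⟨0, hℓ⟩ ω,
            fun i : Fin (ℓ - 1) =>
              a ⟨i, by have := i.2; omega⟩ ω + a ⟨i + 1, by have := i.2; omega⟩ ω) = t)
        = pr p (fun ω => M ω = m) *
          pr p (fun ω =>
            (α ω, β ω, M ω + α ω + β ω + a ⟨0, hℓ⟩ ω,
              fun i : Fin (ℓ - 1) =>
                a ⟨i, by have := i.2; omega⟩ ω + a ⟨i + 1, by have := i.2; omega⟩ ω) = t) := by
  intro m t
  obtain ⟨x, y, c, d⟩ := t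
  -- extended difference function on ℕ
  set dext : ℕ → ZMod 2 := fun j => if h : j < ℓ - 1 then d ⟨j, h⟩ else 0 with hdext
  -- the determined values of a
  set v : ZMod 2 → Fin ℓ → ZMod 2 :=
    fun m' i => m' + x + y + c + ∑ j ∈ Finset.range (i : ℕ), dext j with hv
  have hvdef : ∀ (m' : ZMod 2) (n : ℕ) (h : n < ℓ),
      v m' ⟨n, h⟩ = m' + x + y + c + ∑ j ∈ Finset.range n, dext j := fun _ _ _ => rfl
  have hdedef : ∀ (j : ℕ) (h : j < ℓ - 1), dext j = d ⟨j, h⟩ := fun _ h => dif_pos h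
  -- Event equivalence
  have equiv : ∀ (m' : ZMod 2) (ω : Ω),
      (M ω = m' ∧
        (α ω, β ω, M ω + α ω + β ω + a ⟨0, hℓ⟩ ω,
          fun i : Fin (ℓ - 1) =>
            a ⟨i, by have := i.2; omega⟩ ω + a ⟨i + 1, by have := i.2; omega⟩ ω)
          = (x, y, c, d))
      ↔ (M ω = m' ∧ α ω = x ∧ β ω = y ∧ ∀ i, a i ω = v m' i) := by
    intro m' ω
    constructor
    · rintro ⟨hM, htup⟩
      rw [Prod.mk.injEq, Prod.mk.injEq, Prod.mk.injEq] at htup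
      obtain ⟨hx, hy, hc, hd⟩ := htup
      replace hd := fun i => congrFun hd i
      refine ⟨hM, hx, hy, ?_⟩
      have h0 : a ⟨0, hℓ⟩ ω = m' + x + y + c := by
        rw [hM, hx, hy] at hc
        exact (zA' (m' + x + y) _ c).mp hc
      have main : ∀ n (h : n < ℓ),
          a ⟨n, h⟩ ω = m' + x + y + c + ∑ j ∈ Finset.range n, dext j := by
        intro n
        induction n with
        | zero => intro h; simpa using h0
        | succ k ih =>
          intro h
          have hk : k < ℓ - 1 := by omega
          have hk' : k < ℓ := by omega
          have hstep := hd ⟨k, hk⟩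
          have h2 : a ⟨k + 1, h⟩ ω = a ⟨k, hk'⟩ ω + d ⟨k, hk⟩ :=
            (zA' _ _ _).mp hstep
          have hde : dext k = d ⟨k, hk⟩ := hdedef k hk
          rw [h2, ih hk', Finset.sum_range_succ, hde, add_assoc]
      intro i
      rw [show i = ⟨i.val, i.isLt⟩ from rfl, hvdef]
      exact main i.val i.isLt
    · rintro ⟨hM, hx, hy, hall⟩
      have h0 : a ⟨0, hℓ⟩ ω = m' + x + y + c := by
        have := (hall ⟨0, hℓ⟩).trans (hvdef m' 0 hℓ)
        simpa using this
      refine ⟨hM, ?_⟩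
      rw [Prod.mk.injEq, Prod.mk.injEq, Prod.mk.injEq]
      refine ⟨hx, hy, ?_, ?_⟩
      · rw [hM, hx, hy, h0]
        exact zB' _ _
      · funext i
        have hilt : (i : ℕ) < ℓ - 1 := i.2
        have e1 := (hall ⟨(i : ℕ), by omega⟩).trans (hvdef m' (i : ℕ) (by omega))
        have e2 := (hall ⟨(i : ℕ) + 1, by omega⟩).trans (hvdef m' ((i : ℕ) + 1) (by omega))
        have hde : dext (i : ℕ) = d i := (hdedef (i : ℕ) hilt).trans (by
          congr 1)
        rw [e1, e2]
        simp only [Finset.sum_range_succ, hde]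
        exact zC' _ _ _
  -- probability of the conjoined event
  have hone : ∀ (m' : ZMod 2) (w : Fin ℓ → ZMod 2),
      pr p (fun ω => M ω = m' ∧ α ω = x ∧ β ω = y ∧ ∀ i, a i ω = w i)
        = (1 / 2 : ℝ) ^ (ℓ + 3) := by
    intro m' w
    rw [hindep, hMunif, hαunif, hβunif]
    have : (∏ i : Fin ℓ, pr p (fun ω => a i ω = w i)) = (1 / 2 : ℝ) ^ ℓ := by
      simp [haunif]
    rw [this]
    ring
  have key : ∀ m' : ZMod 2,
      pr p (fun ω => M ω = m' ∧
        (α ω, β ω, M ω + α ω + β ω + a ⟨0, hℓ⟩ ω,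
          fun i : Fin (ℓ - 1) =>
            a ⟨i, by have := i.2; omega⟩ ω + a ⟨i + 1, by have := i.2; omega⟩ ω)
          = (x, y, c, d)) = (1 / 2 : ℝ) ^ (ℓ + 3) := by
    intro m'
    rw [pr_congr' p (equiv m'), hone]
  rw [key m, hMunif,
    pr_split' p M (fun ω =>
      (α ω, β ω, M ω + α ω + β ω + a ⟨0, hℓ⟩ ω,
        fun i : Fin (ℓ - 1) =>
          a ⟨i, by have := i.2; omega⟩ ω + a ⟨i + 1, by have := i.2; omega⟩ ω) = (x, y, c, d)),
    key 0, key 1]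
  ring
end

section
/- Let G be a finite directed acyclic graph, u an unprotected cut vertex for (s, d), and W_{s,u} defined as the set of vertices v from which u is reachable and such that there is an alternating path from s to v avoiding u with all colliders in In-nodes(u). Then for every v ∈ W_{s,u}, every directed path from v to d passes through u. -/
/-- Reachability from `a` to `b` in the directed graph `E` avoiding vertex `u`. -/
def ReachAvoid {V : Type*} (E : V → V → Prop) (u a b : V) : Prop :=
  Relation.ReflTransGen (fun x y => E x y ∧ x ≠ u ∧ y ≠ u) a b

/-- `l` is a directed path from `a` to `b` in the directed graph `E`. -/
def IsDiPath {V : Type*} (E : V → V → Prop) (l : List V) (a b : V) : Prop :=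
  l.head? = some a ∧ l.getLast? = some b ∧ l.Chain' E ∧ l.Nodup

/-- `v` is a collider of the alternating path `l`: it has two consecutive incoming
directed edges along `l`. -/
def IsCollider {V : Type*} (E : V → V → Prop) (v : V) (l : List V) : Prop :=
  ∃ (l₁ : List V) (a b : V) (l₂ : List V), l = l₁ ++ a :: v :: b :: l₂ ∧ E a v ∧ E b v

/-- There is an alternating path (a path in the underlying undirected graph) from `x` to
`y` that avoids `u` and all of whose colliders are in-neighbors of `u`. -/
def GoodAlt {V : Type*} (E : V → V → Prop) (u x y : V) : Prop :=
  ∃ l : List V, l.head? = some x ∧ l.getLast? = some y ∧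
    l.Chain' (fun a b => E a b ∨ E b a) ∧ u ∉ l ∧
    ∀ v, IsCollider E v l → E v u

/-- `v ∈ W_{s,u}`: `u` is reachable from `v`, and there is an alternating path from `s`
to `v` avoiding `u` with all colliders in the in-neighborhood of `u`. -/
def MemW {V : Type*} (E : V → V → Prop) (s u v : V) : Prop :=
  Relation.ReflTransGen E v u ∧ GoodAlt E u s v

theorem stmt10 {V : Type*} [Fintype V] (E : V → V → Prop)
    (hacyc : ∀ v, ¬ Relation.TransGen E v v)
    (s d u : V) (hus : u ≠ s) (hud : u ≠ d)
    (hreach : Relation.ReflTransGen E s d)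
    (hcut : ¬ ReachAvoid E u s d)
    (hunprot : ¬ GoodAlt E u s d) :
    ∀ v, MemW E s u v → ∀ l : List V, IsDiPath E l v d → u ∈ l := by
  rintro v ⟨-, L, hLh, hLl, hLc, hLu, hLcol⟩ l ⟨hlh, hll, hlc, -⟩
  by_contra hu
  obtain ⟨x, T, rfl⟩ : ∃ x T, l = x :: T := by
    cases l with
    | nil => simp at hlh
    | cons x T => exact ⟨x, T, rfl⟩
  have hx : x = v := by simpa using hlh
  subst hx
  have hLne : L ≠ [] := by rintro rfl; simp at hLh
  have hn1 : 1 ≤ L.length := List.length_pos_iff.mpr hLne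
  have hLlast : L.getLast hLne = x := by
    have := List.getLast?_eq_getLast hLne
    rw [hLl] at this; exact (Option.some_inj.mp this).symm
  have hdropL : L.drop (L.length - 1) = [x] := by
    conv_lhs => rw [← List.dropLast_append_getLast hLne]
    rw [List.drop_append, List.length_dropLast,
      List.drop_of_length_le (by simp [List.length_dropLast]), hLlast]
    simp
  have hdropM : (L ++ T).drop (L.length - 1) = x :: T := by
    rw [List.drop_append, hdropL]
    have h0 : L.length - 1 - L.length = 0 := by omega
    rw [h0]
    simp
  apply hunprot
  refine ⟨L ++ T, ?_, ?_, ?_, ?_, ?_⟩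
  · cases L with
    | nil => exact absurd rfl hLne
    | cons a t => simpa using hLh
  · cases T with
    | nil =>
      have hxd : x = d := by simpa using hll
      rw [← hxd]
      simpa using hLl
    | cons t T' =>
      rw [List.getLast?_append_of_ne_nil _ (by simp)]
      simpa using hll
  · show List.IsChain _ (L ++ T)
    rw [List.isChain_append]
    refine ⟨hLc, ((List.isChain_cons.mp hlc).2).imp fun a b h => Or.inl h, ?_⟩
    intro y hy z hz
    rw [hLl] at hy
    cases hy
    exact Or.inl ((List.isChain_cons.mp hlc).1 z hz)
  · simp only [List.mem_append]
    rintro (h | h)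
    · exact hLu h
    · exact hu (List.mem_cons_of_mem _ h)
  · rintro w ⟨l₁, a, b, l₂, hM, haw, hbw⟩
    rcases le_or_gt (l₁.length + 3) L.length with hle | hlt
    · -- collider lies inside L
      refine hLcol w ⟨l₁, a, b, l₂.take (L.length - (l₁.length + 3)), ?_, haw, hbw⟩
      have h1 : L = (L ++ T).take L.length := by simp
      conv_lhs => rw [h1, hM]
      rw [List.take_append, List.take_of_length_le (by omega)]
      congr 1
      have h2 : L.length - l₁.length = (L.length - (l₁.length + 3)) + 3 := by omega
      rw [h2]
      simp only [List.take_succ_cons]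
    · -- the edge w → b is a directed edge; contradiction with acyclicity
      exfalso
      have hdk : (L ++ T).drop (l₁.length + 1) = w :: b :: l₂ := by
        rw [hM, List.drop_append,
          List.drop_of_length_le (by omega)]
        have h1 : l₁.length + 1 - l₁.length = 1 := by omega
        rw [h1]
        simp
      have hsuff : w :: b :: l₂ = (x :: T).drop (l₁.length + 2 - L.length) := by
        rw [← hdropM, List.drop_drop, ← hdk]
        congr 1
        omega
      have hch : List.Chain' E (w :: b :: l₂) := by
        rw [hsuff]; exact List.IsChain.drop hlc _
      have hwb : E w b := (List.isChain_cons_cons.mp hch).1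
      exact hacyc w (Relation.TransGen.head hwb (Relation.TransGen.single hbw))
end

section
/- Let G be a finite directed acyclic graph and u a vertex. For a vertex s with u reachable from s, define W_{s,u} as the set of vertices v from which u is reachable and such that there exists an alternating path from s to v avoiding u with all colliders in In-nodes(u). Then for any two such vertices s_i, s_j, the sets W_{s_i,u} and W_{s_j,u} are either equal or disjoint. -/
section Aux

variable {V : Type*} {E : V → V → Prop} {u : V}

/-- Good alternating path together with information about the approach to the endpoint:
if the second-to-last vertex `a` has a directed edge into the endpoint `y`, then `s`. -/
def GA (E : V → V → Prop) (u x y : V) (s : Prop) : Prop :=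
  ∃ l : List V, l.head? = some x ∧ l.getLast? = some y ∧
    l.Chain' (fun a b => E a b ∨ E b a) ∧ u ∉ l ∧
    (∀ v, IsCollider E v l → E v u) ∧
    (∀ a, l.dropLast.getLast? = some a → E a y → s)

lemma GA.mono {x y : V} {s s' : Prop} (h : s → s') (hg : GA E u x y s) : GA E u x y s' := by
  obtain ⟨l, h1, h2, h3, h4, h5, h6⟩ := hg
  exact ⟨l, h1, h2, h3, h4, h5, fun a ha he => h (h6 a ha he)⟩

lemma GA.of_goodAlt {x y : V} (h : GoodAlt E u x y) : GA E u x y True := by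
  obtain ⟨l, h1, h2, h3, h4, h5⟩ := h
  exact ⟨l, h1, h2, h3, h4, h5, fun _ _ _ => trivial⟩

lemma GA.toGoodAlt {x y : V} {s : Prop} (h : GA E u x y s) : GoodAlt E u x y := by
  obtain ⟨l, h1, h2, h3, h4, h5, _⟩ := h
  exact ⟨l, h1, h2, h3, h4, h5⟩

lemma GA.ne_u {x y : V} {s : Prop} (h : GA E u x y s) : y ≠ u := by
  obtain ⟨l, _, h2, _, h4, _, _⟩ := h
  intro e
  exact h4 (e ▸ List.mem_of_mem_getLast? (h2 ▸ rfl))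

lemma isCollider_cons {v x : V} {l : List V} (h : IsCollider E v l) :
    IsCollider E v (x :: l) := by
  obtain ⟨l₁, a, b, l₂, rfl, ha, hb⟩ := h
  exact ⟨x :: l₁, a, b, l₂, rfl, ha, hb⟩

lemma isCollider_reverse {v : V} {l : List V} (h : IsCollider E v l) :
    IsCollider E v l.reverse := by
  obtain ⟨l₁, a, b, l₂, rfl, ha, hb⟩ := h
  refine ⟨l₂.reverse, b, a, l₁.reverse, ?_, hb, ha⟩
  simp

/-- Decomposition of a collider of an appended list. -/
lemma isCollider_append {v : V} {A B : List V} (h : IsCollider E v (A ++ B)) :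
    IsCollider E v A ∨ IsCollider E v B ∨
    (∃ a b, A.dropLast.getLast? = some a ∧ A.getLast? = some v ∧ B.head? = some b ∧
      E a v ∧ E b v) ∨
    (∃ a b, A.getLast? = some a ∧ B.head? = some v ∧ B.tail.head? = some b ∧
      E a v ∧ E b v) := by
  obtain ⟨l₁, a, b, l₂, heq, ha, hb⟩ := h
  rcases List.append_eq_append_iff.1 heq with ⟨t, ht1, ht2⟩ | ⟨t, ht1, ht2⟩
  · -- l₁ = A ++ t, B = t ++ a :: v :: b :: l₂ : collider inside B
    exact Or.inr (Or.inl ⟨t, a, b, l₂, ht2, ha, hb⟩)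
  · -- A = l₁ ++ t, a :: v :: b :: l₂ = t ++ B
    match t, ht1, ht2 with
    | [], ht1, ht2 =>
      exact Or.inr (Or.inl ⟨[], a, b, l₂, by simpa using ht2.symm, ha, hb⟩)
    | [x], ht1, ht2 =>
      rw [List.singleton_append] at ht2
      injection ht2 with e1 e2
      refine Or.inr (Or.inr (Or.inr ⟨a, b, ?_, ?_, ?_, ha, hb⟩))
      · rw [ht1, List.getLast?_concat, e1]
      · rw [← e2]; rfl
      · rw [← e2]; rfl
    | [x, x2], ht1, ht2 =>
      rw [List.cons_append, List.singleton_append] at ht2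
      injection ht2 with e1 e2
      injection e2 with e2 e3
      refine Or.inr (Or.inr (Or.inl ⟨a, b, ?_, ?_, ?_, ha, hb⟩))
      · rw [ht1, show l₁ ++ [x, x2] = (l₁ ++ [x]) ++ [x2] by simp,
          List.dropLast_concat, List.getLast?_concat, e1]
      · rw [ht1, show l₁ ++ [x, x2] = (l₁ ++ [x]) ++ [x2] by simp,
          List.getLast?_concat, e2]
      · rw [← e3]; rfl
    | x :: x2 :: x3 :: t', ht1, ht2 =>
      simp only [List.cons_append, List.cons.injEq] at ht2
      obtain ⟨e1, e2, e3, e4⟩ := ht2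
      refine Or.inl ⟨l₁, a, b, t', ?_, ha, hb⟩
      rw [ht1, e1, e2, e3]

lemma goodAlt_reverse {x y : V} (h : GoodAlt E u x y) : GoodAlt E u y x := by
  obtain ⟨l, h1, h2, h3, h4, h5⟩ := h
  refine ⟨l.reverse, ?_, ?_, ?_, ?_, ?_⟩
  · rw [List.head?_reverse]; exact h2
  · rw [List.getLast?_reverse]; exact h1
  · refine List.isChain_reverse.2 ?_
    exact h3.imp (fun a b hab => hab.symm)
  · simpa using h4
  · intro v hv
    exact h5 v (by simpa using isCollider_reverse hv)

/-- Extend a `GA` path by a single edge. -/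
lemma GA.step {x y : V} {s : Prop} (h : GA E u x y s) {b : V} (hb : E y b ∨ E b y)
    (hbu : b ≠ u) (hcol : s → E b y → E y u) : GA E u x b (E y b) := by
  obtain ⟨l, h1, h2, h3, h4, h5, h6⟩ := h
  have hl : l ≠ [] := by rintro rfl; simp at h1
  refine ⟨l ++ [b], ?_, ?_, ?_, ?_, ?_, ?_⟩
  · rcases l with _ | ⟨c, l'⟩
    · exact absurd rfl hl
    · exact h1
  · exact List.getLast?_concat
  · refine List.isChain_append.2 ?_
    refine ⟨h3, List.isChain_singleton b, ?_⟩
    intro p hp q hq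
    simp only [List.head?_cons, Option.mem_def, Option.some.injEq] at hq
    rw [h2] at hp
    simp only [Option.mem_def, Option.some.injEq] at hp
    subst hp; subst hq; exact hb
  · intro hm
    rcases List.mem_append.1 hm with hm | hm
    · exact h4 hm
    · simp at hm; exact hbu hm.symm
  · intro v hv
    rcases isCollider_append hv with hc | hc | ⟨a', b', ha', hv', hb', hE1, hE2⟩ | hc
    · exact h5 v hc
    · obtain ⟨l₁, a', b', l₂, heq, _, _⟩ := hc
      have := congrArg List.length heq
      simp at this; omega
    · -- v = y, a' second-to-last of l, b' = b
      rw [h2] at hv'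
      simp only [Option.some.injEq] at hv'
      subst hv'
      simp only [List.head?_cons, Option.some.injEq] at hb'
      subst hb'
      exact hcol (h6 a' ha' hE1) hE2
    · obtain ⟨a', b', _, hv', hb', _, _⟩ := hc
      simp at hb'
  · intro a' ha' hE
    rw [List.dropLast_concat, h2] at ha'
    simp only [Option.some.injEq] at ha'
    subst ha'
    exact hE

/-- Append a good alternating path onto a `GA` path. -/
lemma GA.append {x y z : V} {s : Prop} (h : GA E u x y s) (l₂ : List V)
    (g1 : l₂.head? = some y) (g2 : l₂.getLast? = some z)
    (g3 : l₂.Chain' (fun a b => E a b ∨ E b a)) (g4 : u ∉ l₂)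
    (g5 : ∀ v, IsCollider E v l₂ → E v u)
    (hj : ∀ b, l₂.tail.head? = some b → E b y → s → E y u) :
    GoodAlt E u x z := by
  obtain ⟨l, h1, h2, h3, h4, h5, h6⟩ := h
  match l₂, g1, g2, g3, g4, g5, hj with
  | [w], g1, g2, g3, g4, g5, hj =>
    simp only [List.head?_cons, Option.some.injEq] at g1
    subst g1
    simp only [List.getLast?_singleton, Option.some.injEq] at g2
    exact ⟨l, h1, g2 ▸ h2, h3, h4, h5⟩
  | w :: b0 :: t, g1, g2, g3, g4, g5, hj =>
    simp only [List.head?_cons, Option.some.injEq] at g1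
    subst g1
    have hl : l ≠ [] := by rintro rfl; simp at h1
    have g3' := List.isChain_cons.1 g3
    refine ⟨l ++ (b0 :: t), ?_, ?_, ?_, ?_, ?_⟩
    · rcases l with _ | ⟨c, l'⟩
      · exact absurd rfl hl
      · exact h1
    · rw [List.getLast?_append_of_ne_nil _ (by simp)]
      rw [List.getLast?_cons_cons] at g2
      exact g2
    · refine List.isChain_append.2 ?_
      refine ⟨h3, g3'.2, ?_⟩
      intro p hp q hq
      rw [h2] at hp
      simp only [Option.mem_def, Option.some.injEq] at hp hq
      subst hp
      exact g3'.1 q (by simp [hq])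
    · intro hm
      rcases List.mem_append.1 hm with hm | hm
      · exact h4 hm
      · exact g4 (List.mem_cons_of_mem _ hm)
    · intro v hv
      rcases isCollider_append hv with hc | hc | ⟨a1, b1, ha1, hv1, hb1, hE1, hE2⟩ |
        ⟨a2, b2, ha2, hv2, hb2, hE1, hE2⟩
      · exact h5 v hc
      · exact g5 v (isCollider_cons hc)
      · -- collider at the junction vertex y
        have ev : w = v := by rw [h2] at hv1; exact Option.some.inj hv1
        have eb : b0 = b1 := by simpa using hb1
        rw [← ev]
        exact hj b0 rfl (by rw [eb, ev]; exact hE2)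
          (h6 a1 ha1 (by rw [ev]; exact hE1))
      · -- collider at b0, first vertex after the junction: it is a collider of l₂
        have ea : w = a2 := by rw [h2] at ha2; exact Option.some.inj ha2
        have ev : b0 = v := by simpa using hv2
        match t, hb2 with
        | b2' :: t', hb2 =>
          have eb : b2' = b2 := by simpa using hb2
          refine g5 v ⟨[], w, b2, t', ?_, ?_, hE2⟩
          · show w :: b0 :: b2' :: t' = [] ++ w :: v :: b2 :: t'
            rw [ev, eb]; rfl
          · rw [ea]; exact hE1

/-- From reachability to `u` (with `y ≠ u`), extract a directed chain from `y`
avoiding `u` whose last vertex is an in-neighbor of `u`. -/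
lemma exists_chain_to_in {y : V} (h : Relation.ReflTransGen E y u) (hy : y ≠ u) :
    ∃ (ps : List V) (p : V), List.Chain E y ps ∧ u ∉ ps ∧
      (y :: ps).getLast? = some p ∧ E p u := by
  revert hy
  induction h using Relation.ReflTransGen.head_induction_on with
  | refl => exact fun hy => absurd rfl hy
  | head hac hcu ih =>
    rename_i a c
    intro _
    by_cases hc : c = u
    · subst hc
      exact ⟨[], a, List.Chain.nil, by simp, rfl, hac⟩
    · obtain ⟨ps, p, hch, hup, hlast, hpu⟩ := ih hc
      refine ⟨c :: ps, p, List.chain_cons.2 ⟨hac, hch⟩, ?_, ?_, hpu⟩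
      · intro hm
        rcases List.mem_cons.1 hm with rfl | hm
        · exact hc rfl
        · exact hup hm
      · rw [List.getLast?_cons_cons]
        exact hlast

/-- Walk up a directed path ending at an in-neighbor of `u` and back down:
this upgrades the approach information to `E y u`. -/
lemma GA.detour (hacyc : ∀ v, ¬ Relation.TransGen E v v) {x : V} :
    ∀ {y : V} {s : Prop} {ps : List V}, GA E u x y s → List.Chain E y ps → u ∉ ps →
    ∀ p, (y :: ps).getLast? = some p → E p u → GA E u x y (E y u) := by
  intro y s ps
  induction ps generalizing y s with
  | nil =>
    intro h _ _ p hp hpu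
    simp only [List.getLast?_singleton, Option.some.injEq] at hp
    subst hp
    exact h.mono fun _ => hpu
  | cons q ps ih =>
    intro h hch hu p hp hpu
    obtain ⟨hyq, hch'⟩ := List.chain_cons.1 hch
    have hqu : q ≠ u := fun e => hu (e ▸ List.mem_cons_self (a := q) (l := ps))
    have hups : u ∉ ps := fun e => hu (List.mem_cons_of_mem _ e)
    have hnqy : ¬ E q y := fun e => hacyc y ((Relation.TransGen.single hyq).tail e)
    have step1 : GA E u x q (E y q) :=
      h.step (Or.inl hyq) hqu (fun _ he => absurd he hnqy)
    rw [List.getLast?_cons_cons] at hp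
    have step2 : GA E u x q (E q u) := ih step1 hch' hups p hp hpu
    have hyu : y ≠ u := h.ne_u
    have step3 : GA E u x y (E q y) :=
      step2.step (Or.inr hyq) hyu (fun hs _ => hs)
    exact step3.mono (fun he => absurd he hnqy)

/-- Transitivity of good alternating paths through a junction vertex from which
`u` is reachable. -/
lemma goodAlt_trans (hacyc : ∀ v, ¬ Relation.TransGen E v v) {x y z : V}
    (h1 : GoodAlt E u x y) (h2 : GoodAlt E u y z)
    (hr : Relation.ReflTransGen E y u) : GoodAlt E u x z := by
  have g : GA E u x y True := GA.of_goodAlt h1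
  have hy : y ≠ u := g.ne_u
  obtain ⟨ps, p, hch, hup, hlast, hpu⟩ := exists_chain_to_in hr hy
  have g' : GA E u x y (E y u) := GA.detour hacyc g hch hup p hlast hpu
  obtain ⟨l₂, g1, g2, g3, g4, g5⟩ := h2
  exact g'.append l₂ g1 g2 g3 g4 g5 (fun _ _ _ hyu => hyu)

end Aux

theorem stmt12 {V : Type*} [Fintype V] (E : V → V → Prop)
    (hacyc : ∀ v, ¬ Relation.TransGen E v v)
    (u si sj : V)
    (hi : Relation.ReflTransGen E si u) (hj : Relation.ReflTransGen E sj u) :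
    (∀ v, MemW E si u v ↔ MemW E sj u v) ∨ (∀ v, ¬ (MemW E si u v ∧ MemW E sj u v)) := by
  by_cases h : ∃ v, MemW E si u v ∧ MemW E sj u v
  · left
    obtain ⟨v, ⟨hvu, hgi⟩, ⟨_, hgj⟩⟩ := h
    have key : ∀ s s', Relation.ReflTransGen E s u → GoodAlt E u s v → GoodAlt E u s' v →
        ∀ w, MemW E s u w → MemW E s' u w := by
      rintro s s' hsu hsv hs'v w ⟨hwu, hsw⟩
      have h3 : GoodAlt E u s' s := goodAlt_trans hacyc hs'v (goodAlt_reverse hsv) hvu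
      exact ⟨hwu, goodAlt_trans hacyc h3 hsw hsu⟩
    intro w
    exact ⟨key si sj hi hgi hgj w, key sj si hj hgj hgi w⟩
  · right
    exact fun v hv => h ⟨v, hv⟩
end

section
/- Over a field F, let A be an m × (1 + n) matrix whose rows are partitioned into blocks A₁, …, A_k, such that in block A_i the only possibly-nonzero entries among columns 2, …, 1+n lie in a set of columns C_i, where C₁, …, C_k are pairwise disjoint subsets of {2, …, 1+n}. If the standard basis vector e₁ = (1, 0, …, 0) lies in the row span of A, then e₁ lies in the row span of A_i for some i. -/
theorem stmt13 {F : Type*} [Field F] (m n k : ℕ)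
    (A : Fin m → Fin (n + 1) → F)   -- rows of an m × (1+n) matrix; column 0 is the message column
    (blk : Fin m → Fin k)           -- block (partition) index of each row
    (C : Fin k → Finset (Fin n))    -- allowed nonzero columns (among columns 2,…,1+n) of each block
    (hdisj : ∀ i j, i ≠ j → Disjoint (C i) (C j))
    (hsupp : ∀ (r : Fin m) (j : Fin n), A r j.succ ≠ 0 → j ∈ C (blk r))
    (he : (Pi.single 0 1 : Fin (n + 1) → F) ∈ Submodule.span F (Set.range A)) :
    ∃ i : Fin k,
      (Pi.single 0 1 : Fin (n + 1) → F) ∈ Submodule.span F (A '' {r : Fin m | blk r = i}) := by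
  obtain ⟨c, hc⟩ := (Submodule.mem_span_range_iff_exists_fun F).1 he
  set v : Fin k → (Fin (n + 1) → F) :=
    fun i => ∑ r ∈ Finset.univ.filter (fun r => blk r = i), c r • A r with hv
  have hsum : ∑ i, v i = (Pi.single 0 1 : Fin (n + 1) → F) := by
    rw [hv, Finset.sum_fiberwise (g := blk) (f := fun r => c r • A r)]
    exact hc
  -- support of v i
  have hvsupp : ∀ (i : Fin k) (j : Fin n), j ∉ C i → v i j.succ = 0 := by
    intro i j hj
    have : v i j.succ = ∑ r ∈ Finset.univ.filter (fun r => blk r = i), c r * A r j.succ := by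
      simp [hv]
    rw [this]
    apply Finset.sum_eq_zero
    intro r hr
    simp only [Finset.mem_filter] at hr
    have : A r j.succ = 0 := by
      by_contra h
      exact hj (hr.2 ▸ hsupp r j h)
    simp [this]
  -- some block has v i 0 ≠ 0
  have h0 : ∑ i, v i 0 = 1 := by
    have := congrFun hsum 0
    simpa using this
  have hex : ∃ i, v i 0 ≠ 0 := by
    by_contra h
    push_neg at h
    rw [Finset.sum_eq_zero (fun i _ => h i)] at h0
    exact one_ne_zero h0.symm
  obtain ⟨i, hi⟩ := hex
  refine ⟨i, ?_⟩
  -- v i is zero on all succ columns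
  have hvz : ∀ j : Fin n, v i j.succ = 0 := by
    intro j
    by_cases hj : j ∈ C i
    · have hall : ∑ i', v i' j.succ = 0 := by
        have := congrFun hsum j.succ
        simpa [Pi.single_apply, (Fin.succ_ne_zero j)] using this
      have : ∑ i', v i' j.succ = v i j.succ := by
        apply Finset.sum_eq_single
        · intro i' _ hne
          apply hvsupp i' j
          intro hj'
          exact Finset.disjoint_left.1 (hdisj i' i hne) hj' hj
        · intro h; exact absurd (Finset.mem_univ i) h
      rw [this] at hall; exact hall
    · exact hvsupp i j hj
  -- hence Pi.single 0 1 = (v i 0)⁻¹ • v i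
  have heq : (Pi.single 0 1 : Fin (n + 1) → F) = (v i 0)⁻¹ • v i := by
    funext x
    refine Fin.cases ?_ ?_ x
    · simp [inv_mul_cancel₀ hi]
    · intro j
      simp [hvz j, Pi.single_apply, (Fin.succ_ne_zero j)]
  rw [heq]
  apply Submodule.smul_mem
  rw [hv]
  apply Submodule.sum_mem
  intro r hr
  simp only [Finset.mem_filter] at hr
  exact Submodule.smul_mem _ _ (Submodule.subset_span ⟨r, hr.2, rfl⟩)
end

section
/- Let M be a uniform random variable and X₁, …, X_k random variables on a finite probability space such that the families {(M, X_i)}ᵢ are constructed with mutually independent auxiliary randomness: concretely, suppose there are mutually independent random variables M, V₁, …, V_k such that X_i is a function of (M, V_i) for each i, and I(M ; X_i) = 0 for each i, and moreover each X_i is an F₂-linear function of the bits of (M, V_i) with M, V₁, …, V_k vectors of i.i.d. uniform bits. Then I(M ; X₁, …, X_k) = 0. -/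
open scoped Classical BigOperators

/-- Real-valued indicator of a proposition. -/
noncomputable def ind (P : Prop) : ℝ := if P then 1 else 0

lemma ind_of {P : Prop} (h : P) : ind P = 1 := if_pos h

lemma ind_of_not {P : Prop} (h : ¬ P) : ind P = 0 := if_neg h

lemma ind_true : ind True = 1 := if_pos trivial

lemma ind_and (P Q : Prop) : ind (P ∧ Q) = ind P * ind Q := by
  by_cases hP : P <;> by_cases hQ : Q <;> simp [ind, hP, hQ]

lemma ind_forall {ι : Type*} [Fintype ι] (P : ι → Prop) :
    ind (∀ i, P i) = ∏ i, ind (P i) := by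
  by_cases h : ∀ i, P i
  · rw [ind_of h]
    exact (Finset.prod_eq_one fun i _ => ind_of (h i)).symm
  · rw [ind_of_not h]
    push_neg at h
    obtain ⟨i, hi⟩ := h
    exact (Finset.prod_eq_zero (Finset.mem_univ i) (ind_of_not hi)).symm

lemma pr_eq {Ω : Type*} [Fintype Ω] (p : Ω → ℝ) (E : Ω → Prop) :
    pr p E = ∑ ω, ind (E ω) * p ω := by
  unfold pr
  refine Finset.sum_congr rfl fun ω _ => ?_
  by_cases h : E ω <;> simp [ind, h]

lemma sum_ind_eq {α : Type*} [Fintype α] (a : α) (f : α → ℝ) :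
    ∑ x, ind (x = a) * f x = f a := by
  simp [ind, ite_mul, Finset.sum_ite_eq']

theorem stmt14 {Ω : Type*} [Fintype Ω]
    (p : Ω → ℝ) (hp : ∀ ω, 0 < p ω) (hsum : ∑ ω, p ω = 1)
    (k a : ℕ) (b c : Fin k → ℕ)
    (M : Ω → (Fin a → ZMod 2))                -- message: a vector of bits
    (V : ∀ i : Fin k, Ω → (Fin (b i) → ZMod 2))  -- auxiliary randomness of scheme i
    (X : ∀ i : Fin k, Ω → (Fin (c i) → ZMod 2))  -- view produced by scheme i
    -- M, V₁, …, V_k are mutually independent vectors of i.i.d. uniform bits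
    (hjoint : ∀ (mv : Fin a → ZMod 2) (vv : ∀ i, Fin (b i) → ZMod 2),
      pr p (fun ω => M ω = mv ∧ ∀ i, V i ω = vv i)
        = (1 / 2 : ℝ) ^ a * ∏ i, (1 / 2 : ℝ) ^ (b i))
    -- each X i is an F₂-linear function of the bits of (M, V i)
    (hlin : ∀ i, ∃ L : ((Fin a → ZMod 2) × (Fin (b i) → ZMod 2)) →ₗ[ZMod 2]
        (Fin (c i) → ZMod 2), ∀ ω, X i ω = L (M ω, V i ω))
    -- I(M ; X i) = 0 for each i
    (hsec : ∀ (i : Fin k) (mv : Fin a → ZMod 2) (xv : Fin (c i) → ZMod 2),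
      pr p (fun ω => M ω = mv ∧ X i ω = xv)
        = pr p (fun ω => M ω = mv) * pr p (fun ω => X i ω = xv)) :
    -- I(M ; X₁, …, X_k) = 0
    ∀ (mv : Fin a → ZMod 2) (xv : ∀ i, Fin (c i) → ZMod 2),
      pr p (fun ω => M ω = mv ∧ ∀ i, X i ω = xv i)
        = pr p (fun ω => M ω = mv) * pr p (fun ω => ∀ i, X i ω = xv i) := by
  classical
  choose L hL using hlin
  set q : ℝ := (1 / 2 : ℝ) ^ a with hq
  have hq0 : q ≠ 0 := by positivity
  set u : ℝ := q * ∏ i, (1 / 2 : ℝ) ^ (b i) with hu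
  have prcongr : ∀ E F : Ω → Prop, (∀ ω, E ω ↔ F ω) → pr p E = pr p F := by
    intro E F h
    rw [pr_eq, pr_eq]
    exact Finset.sum_congr rfl fun ω _ => by rw [iff_iff_eq.mp (h ω)]
  -- key: probability of any event in (M, V) is u times the number of good (m, v)
  have key : ∀ (Q : (Fin a → ZMod 2) → (∀ i, Fin (b i) → ZMod 2) → Prop),
      pr p (fun ω => Q (M ω) (fun i => V i ω))
        = ∑ m : Fin a → ZMod 2, ∑ v : ∀ i, Fin (b i) → ZMod 2, ind (Q m v) * u := by
    intro Q
    rw [pr_eq]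
    have step1 : ∀ ω : Ω, ind (Q (M ω) (fun i => V i ω)) * p ω
        = ∑ m : Fin a → ZMod 2, ∑ v : ∀ i, Fin (b i) → ZMod 2,
            ind (Q m v) * (ind (M ω = m ∧ ∀ i, V i ω = v i) * p ω) := by
      intro ω
      symm
      rw [Finset.sum_eq_single (M ω)]
      · rw [Finset.sum_eq_single (fun i => V i ω)]
        · rw [ind_of (⟨rfl, fun i => rfl⟩ :
            M ω = M ω ∧ ∀ i, V i ω = (fun j => V j ω) i), one_mul]
        · intro v _ hv
          have hn : ¬ (M ω = M ω ∧ ∀ i, V i ω = v i) := by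
            rintro ⟨-, h⟩
            exact hv (funext fun i => (h i).symm)
          rw [ind_of_not hn, zero_mul, mul_zero]
        · intro h; exact absurd (Finset.mem_univ _) h
      · intro m _ hm
        refine Finset.sum_eq_zero fun v _ => ?_
        have hn : ¬ (M ω = m ∧ ∀ i, V i ω = v i) := by
          rintro ⟨h, -⟩
          exact hm h.symm
        rw [ind_of_not hn, zero_mul, mul_zero]
      · intro h; exact absurd (Finset.mem_univ _) h
    rw [Finset.sum_congr rfl fun ω _ => step1 ω, Finset.sum_comm]
    refine Finset.sum_congr rfl fun m _ => ?_
    rw [Finset.sum_comm]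
    refine Finset.sum_congr rfl fun v _ => ?_
    rw [← Finset.mul_sum]
    congr 1
    exact (pr_eq p _).symm.trans (hjoint m v)
  -- factorization of sums over product spaces
  have fact : ∀ g : ∀ i : Fin k, (Fin (b i) → ZMod 2) → ℝ,
      (∑ v : ∀ i, Fin (b i) → ZMod 2, ∏ i, g i (v i)) = ∏ i, ∑ w, g i w := by
    intro g
    rw [Finset.prod_univ_sum]
    rw [Fintype.piFinset_univ]
  -- per-block sums
  set Sg : ∀ i : Fin k, (Fin a → ZMod 2) → ((Fin (c i) → ZMod 2) → Prop) → ℝ :=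
    fun i m T => ∑ v : Fin (b i) → ZMod 2,
      ind (T (L i (m, v))) * (1 / 2 : ℝ) ^ (b i) with hSg
  have hone : ∀ (i : Fin k) (m : Fin a → ZMod 2), Sg i m (fun _ => True) = 1 := by
    intro i m
    rw [hSg]
    simp only [ind_true, one_mul, Finset.sum_const, Finset.card_univ, nsmul_eq_mul,
      Fintype.card_fun, ZMod.card, Fintype.card_fin]
    push_cast
    rw [← mul_pow]
    norm_num
  -- the master computation
  have G : ∀ (Em : (Fin a → ZMod 2) → Prop) (T : ∀ i, (Fin (c i) → ZMod 2) → Prop),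
      pr p (fun ω => Em (M ω) ∧ ∀ i, T i (X i ω))
        = ∑ m : Fin a → ZMod 2, ind (Em m) * (q * ∏ i, Sg i m (T i)) := by
    intro Em T
    refine ((prcongr _ _ fun ω => by simp only [hL]).trans
      (key (fun m v => Em m ∧ ∀ i, T i (L i (m, v i))))).trans ?_
    refine Finset.sum_congr rfl fun m _ => ?_
    calc ∑ v : ∀ i, Fin (b i) → ZMod 2, ind (Em m ∧ ∀ i, T i (L i (m, v i))) * u
        = ∑ v : ∀ i, Fin (b i) → ZMod 2,
            ind (Em m) * (q * ∏ i, ind (T i (L i (m, v i))) * (1 / 2 : ℝ) ^ (b i)) := by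
          refine Finset.sum_congr rfl fun v _ => ?_
          rw [ind_and, ind_forall, hu, Finset.prod_mul_distrib]
          ring
      _ = ind (Em m) * (q * ∏ i, Sg i m (T i)) := by
          rw [← Finset.mul_sum, ← Finset.mul_sum]
          congr 2
          exact fact fun i w => ind (T i (L i (m, w))) * (1 / 2 : ℝ) ^ (b i)
  -- specialize to single-coordinate conditions
  set s : ∀ i : Fin k, (Fin a → ZMod 2) → (Fin (c i) → ZMod 2) → ℝ :=
    fun i m x => Sg i m (fun w => w = x) with hs_def
  have hM : ∀ m0 : Fin a → ZMod 2, pr p (fun ω => M ω = m0) = q := by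
    intro m0
    refine ((prcongr _ _ (fun ω => by simp)).trans
      (G (fun m' => m' = m0) (fun i _ => True))).trans ?_
    rw [sum_ind_eq]
    rw [Finset.prod_eq_one fun i _ => hone i m0, mul_one]
  -- the dependent "condition only at coordinate i" trick
  have hT : ∀ (i : Fin k) (x : Fin (c i) → ZMod 2),
      ∃ T : ∀ j, (Fin (c j) → ZMod 2) → Prop,
        (∀ ω, ((∀ j, T j (X j ω)) ↔ X i ω = x)) ∧
        (∀ m, ∏ j, Sg j m (T j) = s i m x) := by
    intro i x
    refine ⟨fun j w => ∀ h : j = i, h ▸ w = x, fun ω => ?_, fun m => ?_⟩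
    · constructor
      · intro H; exact H i rfl
      · intro hx j h; subst h; exact hx
    · rw [Finset.prod_eq_single i]
      · show Sg i m (fun w => ∀ h : i = i, h ▸ w = x) = s i m x
        exact congrArg (Sg i m) (funext fun w => propext
          (⟨fun H => H rfl, fun hw h => hw⟩ : (∀ h : i = i, h ▸ w = x) ↔ w = x))
      · intro j _ hj
        show Sg j m (fun w => ∀ h : j = i, h ▸ w = x) = 1
        have he : (fun w : Fin (c j) → ZMod 2 => ∀ h : j = i, h ▸ w = x)
            = fun _ => True := funext fun w => eq_true fun h => absurd h hj
        rw [he]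
        exact hone j m
      · intro h; exact absurd (Finset.mem_univ _) h
  have hMX : ∀ (i : Fin k) (x : Fin (c i) → ZMod 2) (m0 : Fin a → ZMod 2),
      pr p (fun ω => M ω = m0 ∧ X i ω = x) = q * s i m0 x := by
    intro i x m0
    obtain ⟨T, hT1, hT2⟩ := hT i x
    refine ((prcongr _ _ (fun ω => by rw [hT1 ω])).trans
      (G (fun m' => m' = m0) T)).trans ?_
    rw [sum_ind_eq, hT2]
  have hX : ∀ (i : Fin k) (x : Fin (c i) → ZMod 2),
      pr p (fun ω => X i ω = x) = q * ∑ m0 : Fin a → ZMod 2, s i m0 x := by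
    intro i x
    obtain ⟨T, hT1, hT2⟩ := hT i x
    refine ((prcongr _ _ (fun ω => by rw [hT1 ω]; simp)).trans
      (G (fun _ => True) T)).trans ?_
    simp only [ind_true, one_mul]
    rw [← Finset.mul_sum]
    exact congrArg (q * ·) (Finset.sum_congr rfl fun m _ => hT2 m)
  -- security ⇒ s i m x does not depend on m
  have hconst : ∀ (i : Fin k) (x : Fin (c i) → ZMod 2) (m0 : Fin a → ZMod 2),
      s i m0 x = q * ∑ m1 : Fin a → ZMod 2, s i m1 x := by
    intro i x m0
    have h := hsec i m0 x
    rw [hMX, hM, hX] at h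
    exact mul_left_cancel₀ hq0 (by linarith [h])
  -- finish
  intro mv xv
  have hLHS : pr p (fun ω => M ω = mv ∧ ∀ i, X i ω = xv i)
      = q * ∏ i, s i mv (xv i) := by
    refine (G (fun m' => m' = mv) (fun i w => w = xv i)).trans ?_
    rw [sum_ind_eq]
  have hXall : pr p (fun ω => ∀ i, X i ω = xv i)
      = ∑ m0 : Fin a → ZMod 2, q * ∏ i, s i m0 (xv i) := by
    refine ((prcongr _ _ (fun ω => by simp)).trans
      (G (fun _ => True) (fun i w => w = xv i))).trans ?_
    simp only [ind_true, one_mul]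
    rfl
  rw [hLHS, hM, hXall]
  have hrepl : ∀ m0 : Fin a → ZMod 2, ∏ i, s i m0 (xv i) = ∏ i, s i mv (xv i) :=
    fun m0 => Finset.prod_congr rfl fun i _ => by rw [hconst i (xv i) m0, hconst i (xv i) mv]
  rw [Finset.sum_congr rfl fun m0 _ => by rw [hrepl m0]]
  rw [Finset.sum_const, Finset.card_univ, nsmul_eq_mul, Fintype.card_fun]
  simp only [ZMod.card, Fintype.card_fin]
  push_cast
  rw [hq, ← mul_assoc, ← mul_pow]
  norm_num
end

section
/- Let G be a finite directed acyclic graph with d reachable from s, and let u₁, …, u_c be the cut vertices for (s, d), listed in a topological order of G. Setting u₀ = s and u_{c+1} = d, for every i ∈ {1, …, c+1}, every directed path from s to d passes through u_{i-1} and then u_i (in that order), and consequently u_i is reachable from u_{i-1}. -/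
/-- `v` is a cut vertex for the pair `(a, b)`: `v ∉ {a, b}` and every directed path from
`a` to `b` passes through `v`. -/
def IsCutVertex {V : Type*} (E : V → V → Prop) (a b v : V) : Prop :=
  v ≠ a ∧ v ≠ b ∧ ¬ ReachAvoid E v a b

section helpers
variable {V : Type*} {E : V → V → Prop}

lemma pairwise_ord {ord : V → ℕ} (hord : ∀ a b, E a b → ord a < ord b)
    {l : List V} (hl : l.Chain' E) : l.Pairwise (fun x y => ord x < ord y) := by
  haveI : IsTrans V (fun x y => ord x < ord y) := ⟨fun _ _ _ => Nat.lt_trans⟩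
  exact List.isChain_iff_pairwise.mp (hl.imp fun _ _ h => hord _ _ h)

lemma chain'_pairwise_rtg {l : List V} (hl : l.Chain' E) :
    l.Pairwise (Relation.ReflTransGen E) := by
  haveI : IsTrans V (Relation.ReflTransGen E) := ⟨fun _ _ _ => Relation.ReflTransGen.trans⟩
  exact List.isChain_iff_pairwise.mp (hl.imp fun _ _ h => Relation.ReflTransGen.single h)

lemma split_pair {ord : V → ℕ} {l : List V} (hp : l.Pairwise (fun x y => ord x < ord y))
    {x y : V} (hx : x ∈ l) (hy : y ∈ l) (hxy : ord x < ord y) :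
    ∃ l₁ l₂ l₃, l = l₁ ++ x :: l₂ ++ y :: l₃ := by
  obtain ⟨l₁, l₂, rfl⟩ := List.append_of_mem hx
  rcases List.mem_append.mp hy with h | h
  · exfalso
    have := (List.pairwise_append.mp hp).2.2 y h x List.mem_cons_self
    omega
  · rcases List.mem_cons.mp h with rfl | h
    · omega
    · obtain ⟨m₁, m₂, rfl⟩ := List.append_of_mem h
      exact ⟨l₁, m₁, m₂, by simp⟩

lemma reachAvoid_of_path {v : V} :
    ∀ (l : List V) {a b : V}, l.head? = some a → l.getLast? = some b →
      l.Chain' E → v ∉ l → ReachAvoid E v a b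
  | [], a, b, h, _, _, _ => by simp at h
  | [x], a, b, h1, h2, _, hv => by
      simp only [List.head?_cons, Option.some.injEq] at h1
      simp only [List.getLast?_singleton, Option.some.injEq] at h2
      subst h1; subst h2
      exact Relation.ReflTransGen.refl
  | x :: y :: t, a, b, h1, h2, hc, hv => by
      simp only [List.head?_cons, Option.some.injEq] at h1
      subst h1
      simp only [List.mem_cons, not_or] at hv
      have hE : E x y := (List.isChain_cons_cons.mp hc).1
      have ih := reachAvoid_of_path (v := v) (y :: t) (a := y) (b := b) (by simp)
        (by simpa using h2) (List.isChain_cons_cons.mp hc).2 (by simp; tauto)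
      exact Relation.ReflTransGen.head ⟨hE, Ne.symm hv.1, Ne.symm hv.2.1⟩ ih

lemma exists_dipath {ord : V → ℕ} (hord : ∀ a b, E a b → ord a < ord b)
    {s d : V} (hreach : Relation.ReflTransGen E s d) : ∃ l, IsDiPath E l s d := by
  obtain ⟨m, hm1, hm2⟩ := List.exists_isChain_cons_of_relationReflTransGen hreach
  have hchain : (s :: m).Chain' E := hm1
  refine ⟨s :: m, by simp, ?_, hchain, ?_⟩
  · rw [List.getLast?_eq_getLast (List.cons_ne_nil _ _), hm2]
  · exact (pairwise_ord hord hchain).imp (fun h hab => by subst hab; exact lt_irrefl _ h)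

end helpers

theorem stmt16 {V : Type*} [Fintype V] (E : V → V → Prop)
    (ord : V → ℕ) (hord : ∀ a b, E a b → ord a < ord b)  -- topological order (G is a DAG)
    (s d : V) (hsd : s ≠ d) (hreach : Relation.ReflTransGen E s d)
    (c : ℕ) (u : ℕ → V) (hu0 : u 0 = s) (hucd : u (c + 1) = d)
    (hcut : ∀ i, 1 ≤ i → i ≤ c → IsCutVertex E s d (u i))
    (hall : ∀ v, IsCutVertex E s d v → ∃ i, 1 ≤ i ∧ i ≤ c ∧ u i = v)
    (hmono : ∀ i j, 1 ≤ i → i < j → j ≤ c → ord (u i) < ord (u j)) :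
    ∀ i, 1 ≤ i → i ≤ c + 1 →
      ((∀ l : List V, IsDiPath E l s d →
          ∃ l₁ l₂ l₃ : List V, l = l₁ ++ u (i - 1) :: l₂ ++ u i :: l₃)
        ∧ Relation.ReflTransGen E (u (i - 1)) (u i)) := by
  -- membership of relevant vertices in any path
  have hmemc : ∀ l, IsDiPath E l s d → ∀ j, 1 ≤ j → j ≤ c → u j ∈ l := by
    intro l hl j hj1 hj2
    by_contra h
    exact (hcut j hj1 hj2).2.2 (reachAvoid_of_path l hl.1 hl.2.1 hl.2.2.1 h)
  have hmems : ∀ l, IsDiPath E l s d → s ∈ l := fun l hl =>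
    List.mem_of_mem_head? (by rw [hl.1]; simp)
  have hmemd : ∀ l, IsDiPath E l s d → d ∈ l := fun l hl =>
    List.mem_of_mem_getLast? (by rw [hl.2.1]; simp)
  -- a reference path
  obtain ⟨p, hp⟩ := exists_dipath hord hreach
  have hppw := pairwise_ord hord hp.2.2.1
  -- ord facts from the reference path
  have hords : ∀ x ∈ p, x ≠ s → ord s < ord x := by
    intro x hx hxs
    obtain ⟨t, rfl⟩ : ∃ t, p = s :: t := by
      cases p with
      | nil => simp [IsDiPath] at hp
      | cons a t => exact ⟨t, by have := hp.1; simp at this; rw [this]⟩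
    have hx' : x ∈ t := by rcases List.mem_cons.mp hx with h | h; exact absurd h hxs; exact h
    exact (List.pairwise_cons.mp hppw).1 x hx'
  have hordd : ∀ x ∈ p, x ≠ d → ord x < ord d := by
    intro x hx hxd
    obtain ⟨t, rfl⟩ : ∃ t, p = t ++ [d] := by
      have h := hp.2.1
      cases hne : p.getLast? with
      | none => rw [hne] at h; simp at h
      | some y =>
        rw [hne] at h
        obtain ⟨t, ht⟩ := List.getLast?_eq_some_iff.mp hne
        exact ⟨t, by rw [ht]; simp at h; rw [h]⟩
    have hx' : x ∈ t := by
      rcases List.mem_append.mp hx with h | h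
      · exact h
      · simp at h; exact absurd h hxd
    exact (List.pairwise_append.mp hppw).2.2 x hx' d (by simp)
  intro i hi1 hi2
  -- the key ordering fact
  have key : ord (u (i - 1)) < ord (u i) := by
    rcases Nat.lt_or_ge i (c + 1) with hic | hic
    · -- i ≤ c
      have hic' : i ≤ c := by omega
      rcases Nat.eq_or_lt_of_le hi1 with h1 | h1
      · obtain rfl := h1.symm
        simp only [Nat.sub_self, hu0]
        exact hords (u 1) (hmemc p hp 1 le_rfl hic') (hcut 1 le_rfl hic').1
      · exact hmono (i - 1) i (by omega) (by omega) hic'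
    · -- i = c + 1
      have : i = c + 1 := by omega
      subst this
      simp only [Nat.add_sub_cancel, hucd]
      rcases Nat.eq_zero_or_pos c with hc | hc
      · subst hc; simp only [hu0]
        exact hords d (hmemd p hp) (Ne.symm hsd)
      · exact hordd (u c) (hmemc p hp c hc le_rfl) (hcut c hc le_rfl).2.1
  -- membership of u (i-1) and u i in any path
  have hm1 : ∀ l, IsDiPath E l s d → u (i - 1) ∈ l := by
    intro l hl
    rcases Nat.eq_or_lt_of_le hi1 with h1 | h1
    · obtain rfl := h1.symm; simp only [Nat.sub_self, hu0]; exact hmems l hl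
    · exact hmemc l hl (i - 1) (by omega) (by omega)
  have hm2 : ∀ l, IsDiPath E l s d → u i ∈ l := by
    intro l hl
    rcases Nat.lt_or_ge i (c + 1) with hic | hic
    · exact hmemc l hl i hi1 (by omega)
    · have : i = c + 1 := by omega
      subst this; rw [hucd]; exact hmemd l hl
  have main : ∀ l, IsDiPath E l s d →
      ∃ l₁ l₂ l₃, l = l₁ ++ u (i - 1) :: l₂ ++ u i :: l₃ := by
    intro l hl
    exact split_pair (pairwise_ord hord hl.2.2.1) (hm1 l hl) (hm2 l hl) key
  refine ⟨main, ?_⟩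
  obtain ⟨l₁, l₂, l₃, hsplit⟩ := main p hp
  have hrtg := chain'_pairwise_rtg hp.2.2.1
  rw [hsplit] at hrtg
  exact (List.pairwise_append.mp hrtg).2.2 (u (i - 1))
    (List.mem_append_right _ List.mem_cons_self) (u i) List.mem_cons_self
end
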